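/- arXiv:1709.01236 — 8 statements merged into one kernel-verified Lean document; each statement's English description precedes it below -/
import Mathlib

section
/- For every real angle φ and every k-fold application, one Grover iterate advances the angle by 2θ: G (Real.sin φ • uA + Real.cos φ • uB) = Real.sin (φ + 2θ) • uA + Real.cos (φ + 2θ) • uB. -/
/-!
In the orthonormal pair `(uA, uB)` the uniform state is `h = sin θ • uA + cos θ • uB`, the oracle
`Z_f` reflects across `uB`, and `R_h` reflects across `h`. Two reflections whose axes meet at the
angle `θ` compose to the rotation by `2θ`.
-/

open Real Finset

namespace EuclideanSpace

variable {𝕜 ι : Type*} [RCLike 𝕜] [Fintype ι]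

lemma inner_self_eq_one_of_eq_ite {p : ι → Prop} [DecidablePred p]
    {u : EuclideanSpace 𝕜 ι} {c : ℝ} (hu : ∀ x, u x = if p x then (c : 𝕜) else 0)
    (hc : #{x | p x} * c ^ 2 = 1) : inner 𝕜 u u = 1 := by
  have hx : ∀ x, u x * starRingEnd 𝕜 (u x) = if p x then ((c ^ 2 : ℝ) : 𝕜) else 0 := by
    intro x
    rw [hu]
    split_ifs <;> simp [sq]
  simp only [PiLp.inner_apply, RCLike.inner_apply, hx]
  rw [← sum_filter, sum_const, nsmul_eq_mul]
  exact_mod_cast hc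

lemma inner_eq_zero_of_forall_eq_zero_or {u w : EuclideanSpace 𝕜 ι}
    (h : ∀ x, u x = 0 ∨ w x = 0) : inner 𝕜 u w = 0 := by
  refine (PiLp.inner_apply u w).trans (sum_eq_zero fun x _ => ?_)
  rcases h x with h | h <;> simp [h]

end EuclideanSpace

lemma Real.sin_arcsin_sqrt_div {a b : ℝ} (ha : 0 ≤ a) (hab : a ≤ b) :
    sin (arcsin √(a / b)) = √a / √b := by
  rw [sin_arcsin (by linarith [sqrt_nonneg (a / b)])
    (sqrt_le_one.mpr (div_le_one_of_le₀ hab (ha.trans hab))), sqrt_div ha]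

lemma Real.cos_arcsin_sqrt_div {a b : ℝ} (ha : 0 ≤ a) (hab : a < b) :
    cos (arcsin √(a / b)) = √(b - a) / √b := by
  have hb : 0 < b := ha.trans_lt hab
  rw [cos_arcsin, sq_sqrt (div_nonneg ha hb.le), one_sub_div hb.ne', sqrt_div (by linarith)]

section Rotation

variable {𝕜 E : Type*} [RCLike 𝕜] [NormedAddCommGroup E] [InnerProductSpace 𝕜 E]
  [Module ℝ E] [IsScalarTower ℝ 𝕜 E] {u w : E}

lemma inner_sin_smul_add_cos_smul (hu : inner 𝕜 u u = 1) (hw : inner 𝕜 w w = 1)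
    (huw : inner 𝕜 u w = 0) (θ φ : ℝ) :
    inner 𝕜 (sin θ • u + cos θ • w) (-sin φ • u + cos φ • w) = (cos (φ + θ) : 𝕜) := by
  have hwu : inner 𝕜 w u = 0 := by rw [← inner_conj_symm, huw, map_zero]
  simp only [RCLike.real_smul_eq_coe_smul (K := 𝕜), inner_add_left, inner_add_right,
    inner_smul_left, inner_smul_right, hu, hw, huw, hwu, RCLike.conj_ofReal, cos_add]
  push_cast
  ring

lemma two_inner_smul_sub_eq_rotation (hu : inner 𝕜 u u = 1) (hw : inner 𝕜 w w = 1)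
    (huw : inner 𝕜 u w = 0) (θ φ : ℝ) :
    (2 * inner 𝕜 (sin θ • u + cos θ • w) (-sin φ • u + cos φ • w)) • (sin θ • u + cos θ • w)
        - (-sin φ • u + cos φ • w)
      = sin (φ + 2 * θ) • u + cos (φ + 2 * θ) • w := by
  rw [inner_sin_smul_add_cos_smul hu hw huw]
  simp only [RCLike.real_smul_eq_coe_smul (K := 𝕜)]
  match_scalars <;> norm_cast <;> simp only [sin_add, cos_add, sin_two_mul, cos_two_mul]
  · linear_combination (-2) * sin φ * sin_sq_add_cos_sq θ
  · ring

end Rotation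

theorem grover_iterate_rotates_general
    (N : ℕ) (f : Fin N → Bool)
    (A : Finset (Fin N)) (hA : A = Finset.univ.filter (fun x => f x = true))
    (a : ℕ) (ha : a = A.card) (ha0 : 0 < a) (haN : a < N)
    (h uA uB : EuclideanSpace ℂ (Fin N))
    (hh : ∀ x, h x = ((1 / Real.sqrt N : ℝ) : ℂ))
    (huA : ∀ x, uA x = if f x then ((1 / Real.sqrt a : ℝ) : ℂ) else 0)
    (huB : ∀ x, uB x = if f x then 0 else ((1 / Real.sqrt ((N : ℝ) - a) : ℝ) : ℂ))
    (θ : ℝ) (hθ : θ = Real.arcsin (Real.sqrt ((a : ℝ) / N)))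
    (Zf Rh G : EuclideanSpace ℂ (Fin N) → EuclideanSpace ℂ (Fin N))
    (hZf : ∀ v x, Zf v x = (if f x then -1 else 1) * v x)
    (hRh : ∀ v, Rh v = (2 * (inner ℂ h v : ℂ)) • h - v)
    (hG : G = Rh ∘ Zf)
    (φ : ℝ) :
    G (Real.sin φ • uA + Real.cos φ • uB)
      = Real.sin (φ + 2 * θ) • uA + Real.cos (φ + 2 * θ) • uB := by
  have ha' : (0 : ℝ) < a := by exact_mod_cast ha0
  have haN' : (a : ℝ) < N := by exact_mod_cast haN
  have hb' : (0 : ℝ) < N - a := sub_pos.mpr haN'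
  have hcardB : #{x | ¬f x = true} = N - a := by
    rw [filter_not, card_sdiff_of_subset (filter_subset _ _), card_univ, Fintype.card_fin,
      ← hA, ← ha]
  have huA_one : inner ℂ uA uA = 1 :=
    EuclideanSpace.inner_self_eq_one_of_eq_ite (c := 1 / √(a : ℝ)) huA (by
      rw [← hA, ← ha, div_pow, sq_sqrt ha'.le]; field_simp)
  have huB_one : inner ℂ uB uB = 1 :=
    EuclideanSpace.inner_self_eq_one_of_eq_ite (c := 1 / √((N : ℝ) - a))
      (fun x => (huB x).trans (ite_not _ _ _).symm) (by
      rw [hcardB, Nat.cast_sub haN.le, div_pow, sq_sqrt hb'.le]; field_simp)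
  have huAB : inner ℂ uA uB = 0 :=
    EuclideanSpace.inner_eq_zero_of_forall_eq_zero_or fun x => by
      cases hfx : f x <;> simp [huA, huB, hfx]
  have hh_eq : h = sin θ • uA + cos θ • uB := by
    ext x
    rw [hθ, sin_arcsin_sqrt_div ha'.le haN'.le, cos_arcsin_sqrt_div ha'.le haN', hh]
    have hsa : (√(a : ℝ) : ℂ) ≠ 0 := by exact_mod_cast (sqrt_pos.2 ha').ne'
    have hsb : (√((N : ℝ) - a) : ℂ) ≠ 0 := by exact_mod_cast (sqrt_pos.2 hb').ne'
    cases hfx : f x <;> simp [huA, huB, hfx] <;> field_simp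
  have hZ : Zf (sin φ • uA + cos φ • uB) = -sin φ • uA + cos φ • uB := by
    ext x
    rw [hZf]
    cases hfx : f x <;> simp [huA, huB, hfx]
  rw [hG, Function.comp_apply, hZ, hRh, hh_eq]
  exact two_inner_smul_sub_eq_rotation huA_one huB_one huAB θ φ

/-- Grover iterate advances the angle by `2θ` in the plane spanned by the
good state `uA` and the bad state `uB`. -/
theorem grover_iterate_rotates
    (N : ℕ) (hN : 1 ≤ N) (f : Fin N → Bool)
    (A : Finset (Fin N)) (hA : A = Finset.univ.filter (fun x => f x = true))
    (a : ℕ) (ha : a = A.card) (ha0 : 0 < a) (haN : a < N)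
    (h uA uB : EuclideanSpace ℂ (Fin N))
    (hh : ∀ x, h x = ((1 / Real.sqrt N : ℝ) : ℂ))
    (huA : ∀ x, uA x = if f x then ((1 / Real.sqrt a : ℝ) : ℂ) else 0)
    (huB : ∀ x, uB x = if f x then 0 else ((1 / Real.sqrt ((N : ℝ) - a) : ℝ) : ℂ))
    (θ : ℝ) (hθ : θ = Real.arcsin (Real.sqrt ((a : ℝ) / N)))
    (Zf Rh G : EuclideanSpace ℂ (Fin N) → EuclideanSpace ℂ (Fin N))
    (hZf : ∀ v x, Zf v x = (if f x then -1 else 1) * v x)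
    (hRh : ∀ v, Rh v = (2 * (inner ℂ h v : ℂ)) • h - v)
    (hG : G = Rh ∘ Zf)
    (φ : ℝ) :
    G (Real.sin φ • uA + Real.cos φ • uB)
      = Real.sin (φ + 2 * θ) • uA + Real.cos (φ + 2 * θ) • uB :=
  grover_iterate_rotates_general N f A hA a ha ha0 haN h uA uB hh huA huB θ hθ Zf Rh G hZf hRh hG φ
end

section
/- After k Grover iterations on the uniform superposition, G^k h = Real.sin ((2*k+1)*θ) • uA + Real.cos ((2*k+1)*θ) • uB for every natural number k. -/
/-!
Write `planeState u v α = sin α • u + cos α • v` for orthonormal `u, v`. The uniform state is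
`planeState uA uB θ`. The oracle `Z_f` fixes `uB` and negates `uA`, so it sends angle `α` to `-α`,
and `R_h` is the reflection in the line through `h`, sending angle `β` to `2θ - β`. Hence each Grover
iteration adds `2θ` to the angle, and `k` iterations starting from angle `θ` reach `(2k + 1)θ`.
-/

open scoped InnerProductSpace

noncomputable def planeState {E : Type*} [AddCommGroup E] [Module ℝ E] (u v : E) (α : ℝ) : E :=
  Real.sin α • u + Real.cos α • v

section PlaneRotation

variable {𝕜 E : Type*} [RCLike 𝕜] [NormedAddCommGroup E] [InnerProductSpace 𝕜 E]
  [Module ℝ E] [IsScalarTower ℝ 𝕜 E]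

variable {u v : E}

lemma inner_planeState (hu : ‖u‖ = 1) (hv : ‖v‖ = 1) (huv : ⟪u, v⟫_𝕜 = 0) (α β : ℝ) :
    ⟪planeState u v α, planeState u v β⟫_𝕜 = (Real.cos (α - β) : 𝕜) := by
  have hvu : ⟪v, u⟫_𝕜 = 0 := inner_eq_zero_symm.mp huv
  simp only [planeState, RCLike.real_smul_eq_coe_smul (K := 𝕜), inner_add_left, inner_add_right,
    inner_smul_real_left, inner_smul_real_right, inner_self_eq_norm_sq_to_K, hu, hv, huv, hvu]
  push_cast [Real.cos_sub, smul_eq_mul]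
  ring

lemma planeState_reflection (hu : ‖u‖ = 1) (hv : ‖v‖ = 1) (huv : ⟪u, v⟫_𝕜 = 0) (θ β : ℝ) :
    (2 * ⟪planeState u v θ, planeState u v β⟫_𝕜) • planeState u v θ - planeState u v β
      = planeState u v (2 * θ - β) := by
  rw [inner_planeState hu hv huv, ← RCLike.ofReal_ofNat, ← RCLike.ofReal_mul,
    ← RCLike.real_smul_eq_coe_smul]
  have hsin : 2 * Real.cos (θ - β) * Real.sin θ - Real.sin β = Real.sin (2 * θ - β) := by
    simp only [Real.sin_sub, Real.cos_sub, Real.sin_two_mul, Real.cos_two_mul]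
    linear_combination (2 * Real.sin β) * Real.sin_sq_add_cos_sq θ
  have hcos : 2 * Real.cos (θ - β) * Real.cos θ - Real.cos β = Real.cos (2 * θ - β) := by
    simp only [Real.cos_sub, Real.sin_two_mul, Real.cos_two_mul]
    ring
  simp only [planeState, ← hsin, ← hcos]
  module

lemma iterate_planeState {G : E → E} {δ : ℝ}
    (hG : ∀ α, G (planeState u v α) = planeState u v (α + δ)) (α : ℝ) (k : ℕ) :
    G^[k] (planeState u v α) = planeState u v (α + k * δ) := by
  induction k with
  | zero => simp
  | succ k ih => rw [Function.iterate_succ_apply', ih, hG]; push_cast; ring_nf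

end PlaneRotation

lemma sin_arcsin_sqrt_div {a n : ℝ} (ha : 0 ≤ a) (han : a ≤ n) :
    Real.sin (Real.arcsin √(a / n)) = √a / √n := by
  rw [Real.sin_arcsin (by linarith [Real.sqrt_nonneg (a / n)])
    (Real.sqrt_le_one.mpr (div_le_one_of_le₀ han (ha.trans han))), Real.sqrt_div ha]

lemma cos_arcsin_sqrt_div {a n : ℝ} (ha : 0 ≤ a) (hn : 0 < n) :
    Real.cos (Real.arcsin √(a / n)) = √(n - a) / √n := by
  rw [Real.cos_arcsin, Real.sq_sqrt (div_nonneg ha hn.le), one_sub_div hn.ne',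
    Real.sqrt_div' _ hn.le]

section EuclideanSpace

variable {𝕜 ι : Type*} [RCLike 𝕜] {u v : EuclideanSpace 𝕜 ι}

lemma EuclideanSpace.inner_eq_zero_of_forall_eq_zero_or_s2 [Fintype ι]
    (h : ∀ x, u x = 0 ∨ v x = 0) : ⟪u, v⟫_𝕜 = 0 := by
  rw [PiLp.inner_apply]
  refine Finset.sum_eq_zero fun x _ => ?_
  rcases h x with h | h <;> simp [h]

lemma EuclideanSpace.norm_eq_one_of_eq_ite [Fintype ι] [DecidableEq ι] {s : Finset ι}
    (hs : s.Nonempty) (hu : ∀ x, u x = if x ∈ s then ((1 / √(s.card : ℝ) : ℝ) : 𝕜) else 0) :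
    ‖u‖ = 1 := by
  have hcard : (0 : ℝ) < s.card := by exact_mod_cast hs.card_pos
  rw [EuclideanSpace.norm_eq, Real.sqrt_eq_one]
  simpa [hu, apply_ite norm, Finset.sum_ite_mem] using mul_inv_cancel₀ hcard.ne'

variable (p : ι → Bool)

lemma EuclideanSpace.eq_planeState_of_eq_ite {h : EuclideanSpace 𝕜 ι} {a n : ℝ} (ha : 0 < a)
    (han : a < n) (hh : ∀ x, h x = ((1 / √n : ℝ) : 𝕜))
    (hu : ∀ x, u x = if p x then ((1 / √a : ℝ) : 𝕜) else 0)
    (hv : ∀ x, v x = if p x then 0 else ((1 / √(n - a) : ℝ) : 𝕜)) :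
    h = planeState u v (Real.arcsin √(a / n)) := by
  have hn : 0 < n := ha.trans han
  have hsa : √a ≠ 0 := (Real.sqrt_pos.mpr ha).ne'
  have hsna : √(n - a) ≠ 0 := (Real.sqrt_pos.mpr (sub_pos.mpr han)).ne'
  ext x
  simp only [planeState, PiLp.add_apply, PiLp.smul_apply, hh, hu, hv,
    sin_arcsin_sqrt_div ha.le han.le, cos_arcsin_sqrt_div ha.le hn]
  cases p x <;>
  simp only [Bool.false_eq_true, if_false, if_true, mul_zero, zero_add, add_zero,
    RCLike.real_smul_eq_coe_smul (K := 𝕜), smul_eq_mul, ← RCLike.ofReal_mul] <;>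
  congr 1 <;> field_simp

lemma phaseOracle_planeState {Z : EuclideanSpace 𝕜 ι → EuclideanSpace 𝕜 ι}
    (hZ : ∀ w x, Z w x = (if p x then -1 else 1) * w x)
    (hu : ∀ x, p x = false → u x = 0) (hv : ∀ x, p x = true → v x = 0) (α : ℝ) :
    Z (planeState u v α) = planeState u v (-α) := by
  ext x
  simp only [hZ, planeState, PiLp.add_apply, PiLp.smul_apply, Real.sin_neg, Real.cos_neg]
  cases hx : p x
  · simp [hu x hx]
  · simp [hv x hx]

end EuclideanSpace

theorem grover_iterations_on_uniform_general
    (N : ℕ) (f : Fin N → Bool)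
    (A : Finset (Fin N)) (hA : A = Finset.univ.filter (fun x => f x = true))
    (a : ℕ) (ha : a = A.card) (ha0 : 0 < a) (haN : a < N)
    (h uA uB : EuclideanSpace ℂ (Fin N))
    (hh : ∀ x, h x = ((1 / Real.sqrt N : ℝ) : ℂ))
    (huA : ∀ x, uA x = if f x then ((1 / Real.sqrt a : ℝ) : ℂ) else 0)
    (huB : ∀ x, uB x = if f x then 0 else ((1 / Real.sqrt ((N : ℝ) - a) : ℝ) : ℂ))
    (θ : ℝ) (hθ : θ = Real.arcsin (Real.sqrt ((a : ℝ) / N)))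
    (Zf Rh G : EuclideanSpace ℂ (Fin N) → EuclideanSpace ℂ (Fin N))
    (hZf : ∀ v x, Zf v x = (if f x then -1 else 1) * v x)
    (hRh : ∀ v, Rh v = (2 * (inner ℂ h v : ℂ)) • h - v)
    (hG : G = Rh ∘ Zf)
    (k : ℕ) :
    G^[k] h = Real.sin ((2 * (k : ℝ) + 1) * θ) • uA
        + Real.cos ((2 * (k : ℝ) + 1) * θ) • uB := by
  have haN' : (a : ℝ) < N := by exact_mod_cast haN
  have hcardAc : ((Aᶜ.card : ℕ) : ℝ) = N - a := by
    rw [Finset.card_compl, Fintype.card_fin, ← ha, Nat.cast_sub haN.le]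
  have huA_norm : ‖uA‖ = 1 := EuclideanSpace.norm_eq_one_of_eq_ite (s := A)
    (Finset.card_pos.mp (ha ▸ ha0)) fun x => by
      rw [huA, ← ha, hA]
      simp
  have huB_norm : ‖uB‖ = 1 := EuclideanSpace.norm_eq_one_of_eq_ite (s := Aᶜ)
    (Finset.card_pos.mp (by rw [Finset.card_compl, Fintype.card_fin]; omega)) fun x => by
      rw [hcardAc, huB, hA]
      cases hx : f x <;> simp [hx]
  have hAB : ⟪uA, uB⟫_ℂ = 0 := EuclideanSpace.inner_eq_zero_of_forall_eq_zero_or_s2 fun x => by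
    cases hx : f x <;> simp [huA, huB, hx]
  have h_eq : h = planeState uA uB θ :=
    hθ ▸ EuclideanSpace.eq_planeState_of_eq_ite f (by exact_mod_cast ha0) haN' hh huA huB
  have hstep : ∀ α, G (planeState uA uB α) = planeState uA uB (α + 2 * θ) := fun α => by
    rw [hG, Function.comp_apply,
      phaseOracle_planeState f hZf (fun x hx => by simp [huA, hx]) (fun x hx => by simp [huB, hx]),
      hRh, h_eq, planeState_reflection huA_norm huB_norm hAB]
    ring_nf
  rw [h_eq, iterate_planeState hstep]
  simp only [planeState]
  ring_nf

/-- After `k` Grover iterations on the uniform superposition,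
`G^[k] h = sin ((2k+1)θ) • uA + cos ((2k+1)θ) • uB`. -/
theorem grover_iterations_on_uniform
    (N : ℕ) (hN : 1 ≤ N) (f : Fin N → Bool)
    (A : Finset (Fin N)) (hA : A = Finset.univ.filter (fun x => f x = true))
    (a : ℕ) (ha : a = A.card) (ha0 : 0 < a) (haN : a < N)
    (h uA uB : EuclideanSpace ℂ (Fin N))
    (hh : ∀ x, h x = ((1 / Real.sqrt N : ℝ) : ℂ))
    (huA : ∀ x, uA x = if f x then ((1 / Real.sqrt a : ℝ) : ℂ) else 0)
    (huB : ∀ x, uB x = if f x then 0 else ((1 / Real.sqrt ((N : ℝ) - a) : ℝ) : ℂ))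
    (θ : ℝ) (hθ : θ = Real.arcsin (Real.sqrt ((a : ℝ) / N)))
    (Zf Rh G : EuclideanSpace ℂ (Fin N) → EuclideanSpace ℂ (Fin N))
    (hZf : ∀ v x, Zf v x = (if f x then -1 else 1) * v x)
    (hRh : ∀ v, Rh v = (2 * (inner ℂ h v : ℂ)) • h - v)
    (hG : G = Rh ∘ Zf)
    (k : ℕ) :
    G^[k] h = Real.sin ((2 * (k : ℝ) + 1) * θ) • uA
        + Real.cos ((2 * (k : ℝ) + 1) * θ) • uB :=
  grover_iterations_on_uniform_general N f A hA a ha ha0 haN h uA uB hh huA huB θ hθ Zf Rh G hZf hRh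
    hG k
end

section
/- The probability of measuring a marked item after k Grover iterations equals sin²((2k+1)θ): for every natural number k, ∑_{x ∈ A} ‖(G^k h) x‖² = (Real.sin ((2*k+1)*θ))². -/
/-! The start vector splits as `h = sin θ • uA + cos θ • uB` with `uA ⟂ uB` unit vectors. In the
plane they span, `Z_f` is the reflection in `uB` and `R_h` the reflection in `h`, so `G` rotates by
`2θ` and `G^k h = sin ((2k+1)θ) • uA + cos ((2k+1)θ) • uB`. Only the `uA`-component lives on `A`. -/

open Finset

section Plane

variable (𝕜 : Type*) {E : Type*} [RCLike 𝕜] [NormedAddCommGroup E] [InnerProductSpace 𝕜 E]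

noncomputable def planeVec (u v : E) (φ : ℝ) : E := (Real.sin φ : 𝕜) • u + (Real.cos φ : 𝕜) • v

variable {𝕜} {u v : E}

theorem inner_planeVec (hu : ‖u‖ = 1) (hv : ‖v‖ = 1) (huv : inner 𝕜 u v = 0) (θ φ : ℝ) :
    inner 𝕜 (planeVec 𝕜 u v θ) (planeVec 𝕜 u v φ) = (Real.cos (θ - φ) : 𝕜) := by
  have hvu : inner 𝕜 v u = 0 := inner_eq_zero_symm.mp huv
  simp only [planeVec, inner_add_left, inner_add_right, inner_smul_left, inner_smul_right,
    inner_self_eq_norm_sq_to_K, hu, hv, huv, hvu, RCLike.conj_ofReal, Real.cos_sub]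
  push_cast
  ring

theorem reflect_planeVec (hu : ‖u‖ = 1) (hv : ‖v‖ = 1) (huv : inner 𝕜 u v = 0) (θ φ : ℝ) :
    (2 * inner 𝕜 (planeVec 𝕜 u v θ) (planeVec 𝕜 u v φ)) • planeVec 𝕜 u v θ - planeVec 𝕜 u v φ
      = planeVec 𝕜 u v (2 * θ - φ) := by
  have hsin : Real.sin (2 * θ - φ) = 2 * Real.cos (θ - φ) * Real.sin θ - Real.sin φ := by
    rw [Real.sin_sub, Real.cos_sub, Real.sin_two_mul, Real.cos_two_mul]
    linear_combination (-2 * Real.sin φ) * Real.sin_sq_add_cos_sq θ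
  have hcos : Real.cos (2 * θ - φ) = 2 * Real.cos (θ - φ) * Real.cos θ - Real.cos φ := by
    rw [Real.cos_sub, Real.cos_sub, Real.sin_two_mul, Real.cos_two_mul]
    ring
  rw [inner_planeVec hu hv huv, planeVec, planeVec, planeVec, hsin, hcos]
  push_cast
  module

theorem iterate_planeVec {G : E → E} {θ : ℝ}
    (hG : ∀ φ, G (planeVec 𝕜 u v φ) = planeVec 𝕜 u v (φ + 2 * θ)) (k : ℕ) :
    G^[k] (planeVec 𝕜 u v θ) = planeVec 𝕜 u v ((2 * k + 1) * θ) := by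
  induction k with
  | zero => simp
  | succ k ih =>
    rw [Function.iterate_succ_apply', ih, hG]
    push_cast
    ring_nf

end Plane

section Coordinates

variable {𝕜 ι : Type*} [RCLike 𝕜] [Fintype ι] {p : ι → Prop} [DecidablePred p]

@[simp]
theorem planeVec_apply (u v : EuclideanSpace 𝕜 ι) (φ : ℝ) (x : ι) :
    planeVec 𝕜 u v φ x = (Real.sin φ : 𝕜) * u x + (Real.cos φ : 𝕜) * v x := rfl

theorem EuclideanSpace.inner_eq_zero_of_forall_apply_eq_zero_or {u v : EuclideanSpace 𝕜 ι}
    (h : ∀ x, u x = 0 ∨ v x = 0) : inner 𝕜 u v = 0 := by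
  rw [PiLp.inner_apply]
  refine sum_eq_zero fun x _ => ?_
  rcases h x with hx | hx <;> simp [hx]

theorem EuclideanSpace.norm_eq_one_of_apply_eq_ite {c : ℝ} (hc : (#(univ.filter p) : ℝ) = c)
    (hc0 : 0 < c) {u : EuclideanSpace 𝕜 ι}
    (hu : ∀ x, u x = if p x then ((1 / √c : ℝ) : 𝕜) else 0) : ‖u‖ = 1 := by
  have hsq : ‖u‖ ^ 2 = 1 := by
    have hx : ∀ x, ‖u x‖ ^ 2 = if p x then 1 / c else 0 := fun x => by
      by_cases h : p x <;> simp [hu, h, Real.sq_sqrt hc0.le]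
    rw [EuclideanSpace.norm_sq_eq, Fintype.sum_congr _ _ hx, ← sum_filter, sum_const,
      nsmul_eq_mul, hc]
    field_simp
  exact (pow_eq_one_iff_of_nonneg (norm_nonneg u) two_ne_zero).mp hsq

theorem map_planeVec_eq_planeVec_neg {Z : EuclideanSpace 𝕜 ι → EuclideanSpace 𝕜 ι}
    (hZ : ∀ w x, Z w x = (if p x then -1 else 1) * w x) {u v : EuclideanSpace 𝕜 ι}
    (hu : ∀ x, ¬ p x → u x = 0) (hv : ∀ x, p x → v x = 0) (φ : ℝ) :
    Z (planeVec 𝕜 u v φ) = planeVec 𝕜 u v (-φ) := by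
  ext x
  by_cases hx : p x <;> simp [hZ, hx, hu, hv]

theorem sum_norm_sq_planeVec_apply {u v : EuclideanSpace 𝕜 ι} (hu : ‖u‖ = 1)
    (hu_out : ∀ x, ¬ p x → u x = 0) (hv : ∀ x, p x → v x = 0) (φ : ℝ) :
    ∑ x ∈ univ.filter p, ‖planeVec 𝕜 u v φ x‖ ^ 2 = Real.sin φ ^ 2 := by
  have hsupp : ∑ x ∈ univ.filter p, ‖u x‖ ^ 2 = ∑ x, ‖u x‖ ^ 2 :=
    sum_subset (subset_univ _) fun x _ hx => by simp [hu_out x (by simpa using hx)]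
  calc ∑ x ∈ univ.filter p, ‖planeVec 𝕜 u v φ x‖ ^ 2
      = ∑ x ∈ univ.filter p, Real.sin φ ^ 2 * ‖u x‖ ^ 2 := by
        refine sum_congr rfl fun x hx => ?_
        simp [hv x (mem_filter.mp hx).2, mul_pow]
    _ = Real.sin φ ^ 2 := by
        rw [← mul_sum, hsupp, ← EuclideanSpace.norm_sq_eq, hu, one_pow, mul_one]

theorem eq_planeVec_arcsin {n a : ℝ} (ha : 0 < a) (han : a < n) {h u v : EuclideanSpace 𝕜 ι}
    (hh : ∀ x, h x = ((1 / √n : ℝ) : 𝕜))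
    (hu : ∀ x, u x = if p x then ((1 / √a : ℝ) : 𝕜) else 0)
    (hv : ∀ x, v x = if p x then 0 else ((1 / √(n - a) : ℝ) : 𝕜)) :
    h = planeVec 𝕜 u v (Real.arcsin √(a / n)) := by
  have hn : 0 < n := ha.trans han
  have hsin : Real.sin (Real.arcsin √(a / n)) * (1 / √a) = 1 / √n := by
    rw [Real.sin_arcsin (by linarith [Real.sqrt_nonneg (a / n)])
      (Real.sqrt_le_one.mpr ((div_le_one hn).mpr han.le)), Real.sqrt_div ha.le]
    field_simp
  have hcos : Real.cos (Real.arcsin √(a / n)) * (1 / √(n - a)) = 1 / √n := by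
    rw [Real.cos_arcsin, Real.sq_sqrt (by positivity), show 1 - a / n = (n - a) / n by field_simp,
      Real.sqrt_div (by linarith)]
    have : 0 < √(n - a) := Real.sqrt_pos.mpr (by linarith)
    field_simp
  ext x
  by_cases hx : p x
  · simp [hh, hu, hv, hx, ← hsin]
  · simp [hh, hu, hv, hx, ← hcos]

end Coordinates

theorem grover_success_probability_general
    (N : ℕ) (f : Fin N → Bool)
    (A : Finset (Fin N)) (hA : A = Finset.univ.filter (fun x => f x = true))
    (a : ℕ) (ha : a = A.card) (ha0 : 0 < a) (haN : a < N)
    (h uA uB : EuclideanSpace ℂ (Fin N))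
    (hh : ∀ x, h x = ((1 / Real.sqrt N : ℝ) : ℂ))
    (huA : ∀ x, uA x = if f x then ((1 / Real.sqrt a : ℝ) : ℂ) else 0)
    (huB : ∀ x, uB x = if f x then 0 else ((1 / Real.sqrt ((N : ℝ) - a) : ℝ) : ℂ))
    (θ : ℝ) (hθ : θ = Real.arcsin (Real.sqrt ((a : ℝ) / N)))
    (Zf Rh G : EuclideanSpace ℂ (Fin N) → EuclideanSpace ℂ (Fin N))
    (hZf : ∀ v x, Zf v x = (if f x then -1 else 1) * v x)
    (hRh : ∀ v, Rh v = (2 * (inner ℂ h v : ℂ)) • h - v)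
    (hG : G = Rh ∘ Zf)
    (k : ℕ) :
    ∑ x ∈ A, ‖(G^[k] h) x‖ ^ 2 = (Real.sin ((2 * (k : ℝ) + 1) * θ)) ^ 2 := by
  subst hA
  have ha0' : (0 : ℝ) < a := by exact_mod_cast ha0
  have haN' : (a : ℝ) < N := by exact_mod_cast haN
  have hcardA : (#(univ.filter fun x => f x = true) : ℝ) = a := by rw [ha]
  have hcardB : (#(univ.filter fun x => ¬ f x = true) : ℝ) = N - a := by
    rw [← hcardA, eq_sub_iff_add_eq', ← Nat.cast_add, card_filter_add_card_filter_not, card_univ,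
      Fintype.card_fin]
  have huA_out : ∀ x, ¬ f x = true → uA x = 0 := fun x hx => by simp [huA, hx]
  have huB_out : ∀ x, f x = true → uB x = 0 := fun x hx => by simp [huB, hx]
  have hnA : ‖uA‖ = 1 := EuclideanSpace.norm_eq_one_of_apply_eq_ite hcardA ha0' huA
  have hnB : ‖uB‖ = 1 :=
    EuclideanSpace.norm_eq_one_of_apply_eq_ite hcardB (by linarith) fun x => by
      rw [huB]; split_ifs <;> rfl
  have horth : inner ℂ uA uB = 0 :=
    EuclideanSpace.inner_eq_zero_of_forall_apply_eq_zero_or fun x =>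
      (em (f x = true)).symm.imp (huA_out x) (huB_out x)
  have hdecomp : h = planeVec ℂ uA uB θ := hθ ▸ eq_planeVec_arcsin ha0' haN' hh huA huB
  have hstep : ∀ φ, G (planeVec ℂ uA uB φ) = planeVec ℂ uA uB (φ + 2 * θ) := by
    intro φ
    rw [hG, Function.comp_apply, map_planeVec_eq_planeVec_neg hZf huA_out huB_out, hRh, hdecomp,
      reflect_planeVec hnA hnB horth, sub_neg_eq_add, add_comm]
  rw [hdecomp, iterate_planeVec hstep, sum_norm_sq_planeVec_apply hnA huA_out huB_out]

/-- The probability of measuring a marked item after `k` Grover iterations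
equals `sin² ((2k+1)θ)`. -/
theorem grover_success_probability
    (N : ℕ) (hN : 1 ≤ N) (f : Fin N → Bool)
    (A : Finset (Fin N)) (hA : A = Finset.univ.filter (fun x => f x = true))
    (a : ℕ) (ha : a = A.card) (ha0 : 0 < a) (haN : a < N)
    (h uA uB : EuclideanSpace ℂ (Fin N))
    (hh : ∀ x, h x = ((1 / Real.sqrt N : ℝ) : ℂ))
    (huA : ∀ x, uA x = if f x then ((1 / Real.sqrt a : ℝ) : ℂ) else 0)
    (huB : ∀ x, uB x = if f x then 0 else ((1 / Real.sqrt ((N : ℝ) - a) : ℝ) : ℂ))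
    (θ : ℝ) (hθ : θ = Real.arcsin (Real.sqrt ((a : ℝ) / N)))
    (Zf Rh G : EuclideanSpace ℂ (Fin N) → EuclideanSpace ℂ (Fin N))
    (hZf : ∀ v x, Zf v x = (if f x then -1 else 1) * v x)
    (hRh : ∀ v, Rh v = (2 * (inner ℂ h v : ℂ)) • h - v)
    (hG : G = Rh ∘ Zf)
    (k : ℕ) :
    ∑ x ∈ A, ‖(G^[k] h) x‖ ^ 2 = (Real.sin ((2 * (k : ℝ) + 1) * θ)) ^ 2 :=
  grover_success_probability_general N f A hA a ha ha0 haN h uA uB hh huA huB θ hθ Zf Rh G hZf hRh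
    hG k
end

section
/- (Lemma 1, identity part) For every real θ with Real.sin (2*θ) ≠ 0 and every natural number m ≥ 1, the average (1/m) * ∑_{k=0}^{m−1} (Real.sin ((2*k+1)*θ))² = 1/2 − Real.sin (4*m*θ) / (4*m*Real.sin (2*θ)). -/
open Finset Real

/-- Telescoping: `2 sin x cos((2k+1)x) = sin((2k+2)x) - sin(2kx)`. -/
lemma two_sin_mul_sum_range_cos_odd_mul (x : ℝ) (m : ℕ) :
    2 * sin x * ∑ k ∈ range m, cos ((2 * k + 1) * x) = sin (2 * m * x) := by
  induction m with
  | zero => simp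
  | succ n ih =>
    rw [sum_range_succ, mul_add, ih]
    have h_succ : 2 * ((n + 1 : ℕ) : ℝ) * x = (2 * n + 1) * x + x := by push_cast; ring
    have h_self : 2 * (n : ℝ) * x = (2 * n + 1) * x - x := by ring
    rw [h_succ, h_self, sin_add, sin_sub]
    ring

lemma sum_range_sin_sq_odd_mul (θ : ℝ) (m : ℕ) :
    ∑ k ∈ range m, sin ((2 * k + 1) * θ) ^ 2
      = m / 2 - (∑ k ∈ range m, cos ((2 * k + 1) * (2 * θ))) / 2 := by
  have h_half_angle (k : ℕ) :
      sin ((2 * k + 1) * θ) ^ 2 = 1 / 2 - cos ((2 * k + 1) * (2 * θ)) / 2 := by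
    rw [sin_sq_eq_half_sub]
    ring_nf
  simp only [h_half_angle, sum_sub_distrib, sum_const, card_range, nsmul_eq_mul, ← sum_div]
  ring

/-- Lemma 1 (identity part): the average success probability over a uniformly
random number of iterations `k ∈ {0, …, m−1}` equals
`1/2 − sin(4mθ)/(4m sin(2θ))`. -/
theorem average_success_probability_eq
    (θ : ℝ) (hθ : Real.sin (2 * θ) ≠ 0) (m : ℕ) (hm : 1 ≤ m) :
    (1 / (m : ℝ)) * ∑ k ∈ Finset.range m, (Real.sin ((2 * (k : ℝ) + 1) * θ)) ^ 2
      = 1 / 2 - Real.sin (4 * (m : ℝ) * θ) / (4 * (m : ℝ) * Real.sin (2 * θ)) := by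
  have hm_ne : (m : ℝ) ≠ 0 := by positivity
  have h_sin :
      sin (4 * m * θ) = 2 * sin (2 * θ) * ∑ k ∈ range m, cos ((2 * k + 1) * (2 * θ)) := by
    rw [two_sin_mul_sum_range_cos_odd_mul]
    ring_nf
  rw [sum_range_sin_sq_odd_mul, h_sin]
  generalize ∑ k ∈ range m, cos ((2 * k + 1) * (2 * θ)) = S
  field_simp
  ring
end

section
/- (Lemma 1, consequence) For every real θ with 0 < Real.sin (2*θ) and every natural number m with m ≥ 1 / Real.sin (2*θ), one has 1/2 − Real.sin (4*m*θ) / (4*m*Real.sin (2*θ)) ≥ 1/4; hence picking the number of Grover iterations k uniformly from {0,…,m−1} yields success probability P_m = (1/m) * ∑_{k=0}^{m−1} (Real.sin ((2*k+1)*θ))² ≥ 1/4. -/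
/-!
Since `2 sin² x = 1 - cos 2x` and `sin (2x + 2θ) - sin (2x - 2θ) = 2 cos 2x sin 2θ`, the sum
`4 sin 2θ · ∑_{k<m} sin² ((2k+1)θ)` telescopes to `2m sin 2θ - sin 4mθ`. The average success
probability is therefore `1/2 - sin 4mθ / (4m sin 2θ)`, and `|sin 4mθ| ≤ 1 ≤ m sin 2θ` bounds
the correction term by `1/4`.
-/

open Finset Real

theorem four_mul_sin_two_mul_mul_sin_sq (x θ : ℝ) :
    4 * sin (2 * θ) * sin x ^ 2 = 2 * sin (2 * θ) - (sin (2 * x + 2 * θ) - sin (2 * x - 2 * θ)) := by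
  rw [sin_sq_eq_half_sub, sin_add, sin_sub]
  ring

theorem four_mul_sin_two_mul_mul_sum_range_sin_sq (θ : ℝ) (m : ℕ) :
    4 * sin (2 * θ) * ∑ k ∈ range m, sin ((2 * (k : ℝ) + 1) * θ) ^ 2
      = 2 * m * sin (2 * θ) - sin (4 * m * θ) := by
  have hterm (k : ℕ) : 4 * sin (2 * θ) * sin ((2 * (k : ℝ) + 1) * θ) ^ 2
      = 2 * sin (2 * θ) - (sin (4 * ((k + 1 : ℕ) : ℝ) * θ) - sin (4 * (k : ℝ) * θ)) := by
    rw [four_mul_sin_two_mul_mul_sin_sq]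
    push_cast
    ring_nf
  rw [mul_sum, sum_congr rfl fun k _ => hterm k, sum_sub_distrib,
    sum_range_sub fun k : ℕ => sin (4 * (k : ℝ) * θ)]
  simp only [sum_const, card_range, nsmul_eq_mul, Nat.cast_zero, mul_zero, zero_mul, sin_zero, sub_zero]
  ring

theorem average_sum_range_sin_sq {θ : ℝ} (hθ : sin (2 * θ) ≠ 0) {m : ℕ} (hm : (m : ℝ) ≠ 0) :
    1 / (m : ℝ) * ∑ k ∈ range m, sin ((2 * (k : ℝ) + 1) * θ) ^ 2
      = 1 / 2 - sin (4 * m * θ) / (4 * m * sin (2 * θ)) := by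
  have hsum := four_mul_sin_two_mul_mul_sum_range_sin_sq θ m
  generalize ∑ k ∈ range m, sin ((2 * (k : ℝ) + 1) * θ) ^ 2 = S at hsum ⊢
  generalize sin (4 * m * θ) = t at hsum ⊢
  field_simp
  linear_combination 2 * hsum

theorem quarter_le_half_sub_sin_div (y : ℝ) {c : ℝ} (hc : 1 ≤ c) :
    1 / 4 ≤ 1 / 2 - sin y / (4 * c) := by
  have : sin y / (4 * c) ≤ 1 / 4 := by
    rw [div_le_iff₀ (by linarith)]
    linarith [sin_le_one y]
  linarith

theorem average_success_probability_ge_quarter_general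
    (θ : ℝ) (hθ : 0 < Real.sin (2 * θ)) (m : ℕ)
    (hm : (m : ℝ) ≥ 1 / Real.sin (2 * θ)) :
    1 / 2 - Real.sin (4 * (m : ℝ) * θ) / (4 * (m : ℝ) * Real.sin (2 * θ)) ≥ 1 / 4 ∧
    (1 / (m : ℝ)) * ∑ k ∈ Finset.range m, (Real.sin ((2 * (k : ℝ) + 1) * θ)) ^ 2
      ≥ 1 / 4 := by
  have hms : 1 ≤ (m : ℝ) * sin (2 * θ) := by rwa [ge_iff_le, div_le_iff₀ hθ] at hm
  have hm0 : (m : ℝ) ≠ 0 := by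
    rintro h
    norm_num [h] at hms
  have hbound : 1 / 2 - sin (4 * m * θ) / (4 * m * sin (2 * θ)) ≥ 1 / 4 := by
    rw [mul_assoc 4 (m : ℝ) (sin (2 * θ))]
    exact quarter_le_half_sub_sin_div _ hms
  exact ⟨hbound, average_sum_range_sin_sq hθ.ne' hm0 ▸ hbound⟩

/-- Lemma 1 (consequence): if `m ≥ 1/sin(2θ)` then
`1/2 − sin(4mθ)/(4m sin(2θ)) ≥ 1/4`, hence picking the number of Grover
iterations uniformly from `{0, …, m−1}` succeeds with probability at least
`1/4`. -/
theorem average_success_probability_ge_quarter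
    (θ : ℝ) (hθ : 0 < Real.sin (2 * θ)) (m : ℕ) (hm1 : 1 ≤ m)
    (hm : (m : ℝ) ≥ 1 / Real.sin (2 * θ)) :
    1 / 2 - Real.sin (4 * (m : ℝ) * θ) / (4 * (m : ℝ) * Real.sin (2 * θ)) ≥ 1 / 4 ∧
    (1 / (m : ℝ)) * ∑ k ∈ Finset.range m, (Real.sin ((2 * (k : ℝ) + 1) * θ)) ^ 2
      ≥ 1 / 4 :=
  average_success_probability_ge_quarter_general θ hθ m hm
end

section
/- (Claim 2) The total hybrid deviation is small: ∑_{r : Fin N} ‖ψ_r^(k) − φ^(k)‖ ≤ 2*k*√N. -/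
/-!
Hybrid argument. Since every `U j` and every oracle `O_r` preserves distances, replacing the
oracle calls one at a time gives `‖ψ_r^(k) - φ^(k)‖ ≤ ∑_{j<k} ‖O_r φ^(j) - φ^(j)‖
= 2 ∑_{j<k} ‖Π_r φ^(j)‖`. The `Π_r` split a vector into orthogonal blocks, so
`∑_r ‖Π_r φ^(j)‖ ≤ √N ‖φ^(j)‖ = √N` by Cauchy–Schwarz, and summing over `r` gives `2k√N`.
-/

open Finset

theorem dist_hybrid_le {X : Type*} [PseudoMetricSpace X] (U : ℕ → X → X)
    (hU : ∀ j, Isometry (U j)) (O : X → X) (hO : Isometry O) (ψ φ : ℕ → X)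
    (h0 : ψ 0 = φ 0) (hψ : ∀ j, ψ (j + 1) = U (j + 1) (O (ψ j)))
    (hφ : ∀ j, φ (j + 1) = U (j + 1) (φ j)) (k : ℕ) :
    dist (ψ k) (φ k) ≤ ∑ j ∈ range k, dist (O (φ j)) (φ j) := by
  induction k with
  | zero => simp [h0]
  | succ k ih =>
    calc dist (ψ (k + 1)) (φ (k + 1)) = dist (O (ψ k)) (φ k) := by
          rw [hψ, hφ, (hU _).dist_eq]
      _ ≤ dist (O (ψ k)) (O (φ k)) + dist (O (φ k)) (φ k) := dist_triangle _ _ _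
      _ = dist (ψ k) (φ k) + dist (O (φ k)) (φ k) := by rw [hO.dist_eq]
      _ ≤ ∑ j ∈ range (k + 1), dist (O (φ j)) (φ j) := by
          rw [sum_range_succ]
          gcongr

section BlockProjection

variable {𝕜 ι W : Type*} [RCLike 𝕜] [DecidableEq ι]

def blockProj (r : ι) (v : EuclideanSpace 𝕜 (ι × W)) : EuclideanSpace 𝕜 (ι × W) :=
  WithLp.toLp 2 fun x => if x.1 = r then v x else 0

def phaseOracle (r : ι) (v : EuclideanSpace 𝕜 (ι × W)) : EuclideanSpace 𝕜 (ι × W) :=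
  v - (2 : 𝕜) • blockProj r v

@[simp]
theorem blockProj_apply (r : ι) (v : EuclideanSpace 𝕜 (ι × W)) (x : ι × W) :
    blockProj r v x = if x.1 = r then v x else 0 :=
  rfl

theorem phaseOracle_apply (r : ι) (v : EuclideanSpace 𝕜 (ι × W)) (x : ι × W) :
    phaseOracle r v x = if x.1 = r then -v x else v x := by
  simp only [phaseOracle, PiLp.sub_apply, PiLp.smul_apply, blockProj_apply, smul_eq_mul]
  split_ifs <;> ring

variable [Fintype ι] [Fintype W]

theorem isometry_phaseOracle (r : ι) : Isometry (phaseOracle (𝕜 := 𝕜) (W := W) r) := by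
  refine Isometry.of_dist_eq fun v w => ?_
  simp only [dist_eq_norm]
  rw [← sq_eq_sq₀ (norm_nonneg _) (norm_nonneg _), EuclideanSpace.norm_sq_eq,
    EuclideanSpace.norm_sq_eq]
  refine sum_congr rfl fun x _ => ?_
  simp only [PiLp.sub_apply, phaseOracle_apply]
  split_ifs
  · rw [neg_sub_neg, norm_sub_rev]
  · rfl

theorem dist_phaseOracle_self (r : ι) (v : EuclideanSpace 𝕜 (ι × W)) :
    dist (phaseOracle r v) v = 2 * ‖blockProj r v‖ := by
  rw [dist_eq_norm, phaseOracle, sub_sub_cancel_left, norm_neg, norm_smul]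
  norm_num

theorem sum_norm_blockProj_sq (v : EuclideanSpace 𝕜 (ι × W)) :
    ∑ r, ‖blockProj r v‖ ^ 2 = ‖v‖ ^ 2 := by
  simp only [EuclideanSpace.norm_sq_eq, blockProj_apply, apply_ite (‖·‖ ^ 2)]
  rw [sum_comm]
  simp

theorem sum_norm_blockProj_le (v : EuclideanSpace 𝕜 (ι × W)) :
    ∑ r, ‖blockProj r v‖ ≤ √(Fintype.card ι) * ‖v‖ := by
  have hsq : (∑ r, ‖blockProj r v‖) ^ 2 ≤ (√(Fintype.card ι) * ‖v‖) ^ 2 := by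
    calc (∑ r, ‖blockProj r v‖) ^ 2 ≤ #(univ : Finset ι) * ∑ r, ‖blockProj r v‖ ^ 2 :=
          sq_sum_le_card_mul_sum_sq
      _ = (√(Fintype.card ι) * ‖v‖) ^ 2 := by
          rw [sum_norm_blockProj_sq, mul_pow, Real.sq_sqrt (Nat.cast_nonneg _), card_univ]
  exact abs_le_of_sq_le_sq' hsq (by positivity) |>.2

end BlockProjection

theorem hybrid_total_deviation_general
    (N : ℕ) (W : Type) [Fintype W]
    (Pr : Fin N → EuclideanSpace ℂ (Fin N × W) → EuclideanSpace ℂ (Fin N × W))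
    (hPr : ∀ r v x, Pr r v x = if x.1 = r then v x else 0)
    (Or : Fin N → EuclideanSpace ℂ (Fin N × W) → EuclideanSpace ℂ (Fin N × W))
    (hOr : ∀ r v, Or r v = v - (2 : ℂ) • Pr r v)
    (k : ℕ)
    (U : ℕ → EuclideanSpace ℂ (Fin N × W) ≃ₗᵢ[ℂ] EuclideanSpace ℂ (Fin N × W))
    (v₀ : EuclideanSpace ℂ (Fin N × W)) (hv₀ : ‖v₀‖ = 1)
    (ψ : Fin N → ℕ → EuclideanSpace ℂ (Fin N × W))
    (hψ0 : ∀ r, ψ r 0 = U 0 v₀)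
    (hψ : ∀ r j, ψ r (j + 1) = U (j + 1) (Or r (ψ r j)))
    (φ : ℕ → EuclideanSpace ℂ (Fin N × W))
    (hφ0 : φ 0 = U 0 v₀)
    (hφ : ∀ j, φ (j + 1) = U (j + 1) (φ j)) :
    ∑ r : Fin N, ‖ψ r k - φ k‖ ≤ 2 * (k : ℝ) * Real.sqrt N := by
  have hPr_eq : Pr = blockProj := funext₂ fun r v => PiLp.ext (hPr r v)
  have hOr_eq : Or = phaseOracle := funext₂ fun r v => by rw [hOr, hPr_eq]; rfl
  subst hOr_eq
  have hφ_norm : ∀ j, ‖φ j‖ = 1 := fun j => by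
    induction j with
    | zero => simp [hφ0, hv₀]
    | succ j ih => simp [hφ, ih]
  calc ∑ r, ‖ψ r k - φ k‖ ≤ ∑ r, ∑ j ∈ range k, 2 * ‖blockProj r (φ j)‖ :=
        sum_le_sum fun r _ => by
          rw [← dist_eq_norm]
          simpa only [dist_phaseOracle_self] using
            dist_hybrid_le (fun j => U j) (fun j => (U j).isometry) _ (isometry_phaseOracle r)
              (ψ r) φ (by rw [hψ0, hφ0]) (hψ r) hφ k
    _ = ∑ j ∈ range k, 2 * ∑ r, ‖blockProj r (φ j)‖ := by
        rw [sum_comm]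
        simp only [mul_sum]
    _ ≤ ∑ j ∈ range k, 2 * √N := sum_le_sum fun j _ => by
        simpa [hφ_norm] using sum_norm_blockProj_le (φ j)
    _ = 2 * k * √N := by
        rw [sum_const, card_range, nsmul_eq_mul]
        ring

/-- Claim 2: the total hybrid deviation over all possible marked items is at
most `2k√N`. -/
theorem hybrid_total_deviation
    (N : ℕ) (hN : 1 ≤ N) (W : Type) [Fintype W] [Nonempty W]
    (Pr : Fin N → EuclideanSpace ℂ (Fin N × W) → EuclideanSpace ℂ (Fin N × W))
    (hPr : ∀ r v x, Pr r v x = if x.1 = r then v x else 0)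
    (Or : Fin N → EuclideanSpace ℂ (Fin N × W) → EuclideanSpace ℂ (Fin N × W))
    (hOr : ∀ r v, Or r v = v - (2 : ℂ) • Pr r v)
    (k : ℕ)
    (U : ℕ → EuclideanSpace ℂ (Fin N × W) ≃ₗᵢ[ℂ] EuclideanSpace ℂ (Fin N × W))
    (v₀ : EuclideanSpace ℂ (Fin N × W)) (hv₀ : ‖v₀‖ = 1)
    (ψ : Fin N → ℕ → EuclideanSpace ℂ (Fin N × W))
    (hψ0 : ∀ r, ψ r 0 = U 0 v₀)
    (hψ : ∀ r j, ψ r (j + 1) = U (j + 1) (Or r (ψ r j)))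
    (φ : ℕ → EuclideanSpace ℂ (Fin N × W))
    (hφ0 : φ 0 = U 0 v₀)
    (hφ : ∀ j, φ (j + 1) = U (j + 1) (φ j)) :
    ∑ r : Fin N, ‖ψ r k - φ k‖ ≤ 2 * (k : ℝ) * Real.sqrt N :=
  hybrid_total_deviation_general N W Pr hPr Or hOr k U v₀ hv₀ ψ hψ0 hψ φ hφ0 hφ
end

section
/- (Theorem 3, average-case hardness of the decision problem) For every orthogonal projection P on H (representing the final accepting measurement), the average distinguishing advantage between a uniformly random oracle O_r and the identity oracle is bounded: |(1/N) * ∑_{r : Fin N} ‖P (ψ_r^(k))‖² − ‖P (φ^(k))‖²| ≤ 2*k/√N. In particular, Ω(√N) queries are needed to detect a uniformly random marked element. -/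
open scoped InnerProductSpace

/-!
Hybrid argument. Since `O_r` is an isometry and `O_r φ - φ = -2 Π_r φ`, replacing the oracle
calls one at a time shows `‖ψ_r^(k) - φ^(k)‖ ≤ 2 ∑_{i<k} ‖Π_r φ^(i)‖`. The blocks `Π_r` split
`φ^(i)` orthogonally, so `∑_r ‖Π_r φ^(i)‖² = 1` and, by Cauchy–Schwarz, `∑_r ‖Π_r φ^(i)‖ ≤ √N`;
hence `∑_r ‖ψ_r^(k) - φ^(k)‖ ≤ 2k√N`. Finally, a projective measurement changes its acceptance
probability on unit vectors by at most their distance, and averaging over `r` gives `2k/√N`.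
-/

theorem sq_sub_sq_sq_le_of_sq_add_sq_eq_one {x x' y y' : ℝ} (hx : x ^ 2 + x' ^ 2 = 1)
    (hy : y ^ 2 + y' ^ 2 = 1) : (x ^ 2 - y ^ 2) ^ 2 ≤ (x - y) ^ 2 + (x' - y') ^ 2 := by
  -- `(x² - y²)² = (x - y)(y' - x') · (x + y)(x' + y')`, and each factor is bounded by AM–GM.
  have hfactor : (x ^ 2 - y ^ 2) ^ 2 = ((x - y) * (y' - x')) * ((x + y) * (x' + y')) := by
    linear_combination (x ^ 2 - y ^ 2) * (hx - hy)
  have hA : |(x - y) * (y' - x')| ≤ ((x - y) ^ 2 + (x' - y') ^ 2) / 2 := by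
    rw [abs_le]
    constructor <;> nlinarith [sq_nonneg (x - y + (y' - x')), sq_nonneg (x - y - (y' - x'))]
  have hB : |(x + y) * (x' + y')| ≤ 2 := by
    rw [abs_le]
    constructor <;> nlinarith [sq_nonneg (x + y + (x' + y')), sq_nonneg (x + y - (x' + y')),
      sq_nonneg (x - y), sq_nonneg (x' - y')]
  calc (x ^ 2 - y ^ 2) ^ 2 = |(x - y) * (y' - x')| * |(x + y) * (x' + y')| := by
        rw [← abs_mul, ← hfactor, abs_of_nonneg (sq_nonneg _)]
    _ ≤ ((x - y) ^ 2 + (x' - y') ^ 2) / 2 * 2 := by gcongr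
    _ = (x - y) ^ 2 + (x' - y') ^ 2 := by ring

namespace LinearMap.IsSymmetricProjection

variable {𝕜 E : Type*} [RCLike 𝕜] [NormedAddCommGroup E] [InnerProductSpace 𝕜 E]
  {P : E →ₗ[𝕜] E}

theorem norm_sq_eq_norm_sq_apply_add_norm_sq_sub_apply (hP : P.IsSymmetricProjection) (v : E) :
    ‖v‖ ^ 2 = ‖P v‖ ^ 2 + ‖v - P v‖ ^ 2 := by
  have horth : ⟪P v, v - P v⟫_𝕜 = 0 := by
    rw [hP.isSymmetric, map_sub, ← Module.End.mul_apply, hP.isIdempotentElem.eq, sub_self,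
      inner_zero_right]
  simpa [sq] using norm_add_sq_eq_norm_sq_add_norm_sq_of_inner_eq_zero _ _ horth

theorem abs_norm_sq_apply_sub_norm_sq_apply_le (hP : P.IsSymmetricProjection) {ψ φ : E}
    (hψ : ‖ψ‖ = 1) (hφ : ‖φ‖ = 1) : |‖P ψ‖ ^ 2 - ‖P φ‖ ^ 2| ≤ ‖ψ - φ‖ := by
  have sq_norm_sub_norm_le (a b : E) : (‖a‖ - ‖b‖) ^ 2 ≤ ‖a - b‖ ^ 2 := by
    simpa using sq_le_sq.2 ((abs_norm_sub_norm_le a b).trans (le_abs_self _))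
  have hdist : (‖P ψ‖ - ‖P φ‖) ^ 2 + (‖ψ - P ψ‖ - ‖φ - P φ‖) ^ 2 ≤ ‖ψ - φ‖ ^ 2 := by
    rw [hP.norm_sq_eq_norm_sq_apply_add_norm_sq_sub_apply (ψ - φ), map_sub, sub_sub_sub_comm]
    gcongr ?_ + ?_ <;> apply sq_norm_sub_norm_le
  -- `(‖P ψ‖, ‖ψ - P ψ‖)` and `(‖P φ‖, ‖φ - P φ‖)` lie on the unit circle.
  have hψ' := hP.norm_sq_eq_norm_sq_apply_add_norm_sq_sub_apply ψ
  have hφ' := hP.norm_sq_eq_norm_sq_apply_add_norm_sq_sub_apply φ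
  rw [hψ, one_pow] at hψ'
  rw [hφ, one_pow] at hφ'
  exact abs_le_of_sq_le_sq ((sq_sub_sq_sq_le_of_sq_add_sq_eq_one hψ'.symm hφ'.symm).trans hdist)
    (norm_nonneg _)

end LinearMap.IsSymmetricProjection

theorem norm_eq_of_norm_preserving_steps {E : Type*} [Norm E] {U : ℕ → E → E} {O : E → E}
    (hU : ∀ j v, ‖U j v‖ = ‖v‖) (hO : ∀ v, ‖O v‖ = ‖v‖) {v₀ : E} {x : ℕ → E}
    (h0 : x 0 = U 0 v₀) (hx : ∀ j, x (j + 1) = U (j + 1) (O (x j))) (j : ℕ) : ‖x j‖ = ‖v₀‖ := by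
  induction j with
  | zero => rw [h0, hU]
  | succ j ih => rw [hx, hU, hO, ih]

theorem dist_le_sum_range_dist_apply_self {X : Type*} [PseudoMetricSpace X] {U : ℕ → X → X}
    {O : X → X} (hU : ∀ j, Isometry (U j)) (hO : LipschitzWith 1 O) {ψ φ : ℕ → X}
    (h0 : ψ 0 = φ 0) (hψ : ∀ j, ψ (j + 1) = U (j + 1) (O (ψ j)))
    (hφ : ∀ j, φ (j + 1) = U (j + 1) (φ j)) (k : ℕ) :
    dist (ψ k) (φ k) ≤ ∑ i ∈ Finset.range k, dist (O (φ i)) (φ i) := by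
  induction k with
  | zero => simp [h0]
  | succ j ih =>
    rw [hψ, hφ, (hU _).dist_eq, Finset.sum_range_succ]
    calc dist (O (ψ j)) (φ j) ≤ dist (O (ψ j)) (O (φ j)) + dist (O (φ j)) (φ j) :=
          dist_triangle _ _ _
      _ ≤ dist (ψ j) (φ j) + dist (O (φ j)) (φ j) := by
          gcongr
          simpa using hO.dist_le_mul (ψ j) (φ j)
      _ ≤ _ := by gcongr

theorem abs_inv_card_mul_sum_sub_le {ι : Type*} [Fintype ι] [Nonempty ι] (a : ι → ℝ) (b : ℝ) :
    |1 / (Fintype.card ι : ℝ) * ∑ i, a i - b| ≤ 1 / (Fintype.card ι : ℝ) * ∑ i, |a i - b| := by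
  have hcard : (Fintype.card ι : ℝ) ≠ 0 := Nat.cast_ne_zero.2 Fintype.card_ne_zero
  have hsum : 1 / (Fintype.card ι : ℝ) * ∑ i, a i - b
      = 1 / (Fintype.card ι : ℝ) * ∑ i, (a i - b) := by
    rw [Finset.sum_sub_distrib, Finset.sum_const, Finset.card_univ, nsmul_eq_mul]
    field_simp
  rw [hsum, abs_mul, abs_of_nonneg (by positivity)]
  gcongr
  exact Finset.abs_sum_le_sum_abs _ _

section BlockProjection

-- `Pr r` is the coordinate projection onto the block `{r} × β`.

variable {𝕜 α β : Type*} [RCLike 𝕜] [Fintype α] [Fintype β] [DecidableEq α]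
  {Pr : α → EuclideanSpace 𝕜 (α × β) → EuclideanSpace 𝕜 (α × β)}

theorem sum_norm_sq_blockProj (hPr : ∀ r v x, Pr r v x = if x.1 = r then v x else 0)
    (v : EuclideanSpace 𝕜 (α × β)) : ∑ r, ‖Pr r v‖ ^ 2 = ‖v‖ ^ 2 := by
  simp only [EuclideanSpace.norm_sq_eq, hPr, apply_ite, norm_zero]
  rw [Finset.sum_comm]
  simp

theorem sum_norm_blockProj_le_s16 (hPr : ∀ r v x, Pr r v x = if x.1 = r then v x else 0)
    (v : EuclideanSpace 𝕜 (α × β)) : ∑ r, ‖Pr r v‖ ≤ √(Fintype.card α) * ‖v‖ := by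
  have hcs : (∑ r, ‖Pr r v‖) ^ 2 ≤ (√(Fintype.card α) * ‖v‖) ^ 2 := by
    rw [mul_pow, Real.sq_sqrt (Nat.cast_nonneg _), ← sum_norm_sq_blockProj hPr v]
    exact sq_sum_le_card_mul_sum_sq
  exact (le_abs_self _).trans (abs_le_of_sq_le_sq hcs (by positivity))

theorem norm_sub_two_smul_blockProj (hPr : ∀ r v x, Pr r v x = if x.1 = r then v x else 0)
    (r : α) (v : EuclideanSpace 𝕜 (α × β)) : ‖v - (2 : 𝕜) • Pr r v‖ = ‖v‖ := by
  simp only [EuclideanSpace.norm_eq]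
  congr 1
  refine Finset.sum_congr rfl fun x _ => ?_
  simp only [PiLp.sub_apply, PiLp.smul_apply, hPr, smul_eq_mul]
  split_ifs
  · rw [show v x - 2 * v x = -v x by ring, norm_neg]
  · rw [mul_zero, sub_zero]

theorem isometry_sub_two_smul_blockProj (hPr : ∀ r v x, Pr r v x = if x.1 = r then v x else 0)
    (r : α) : Isometry fun v : EuclideanSpace 𝕜 (α × β) => v - (2 : 𝕜) • Pr r v := by
  have hsub (a b : EuclideanSpace 𝕜 (α × β)) : Pr r (a - b) = Pr r a - Pr r b := by
    ext x
    simp only [hPr, PiLp.sub_apply]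
    split_ifs <;> simp
  refine Isometry.of_dist_eq fun a b => ?_
  rw [dist_eq_norm, dist_eq_norm, ← norm_sub_two_smul_blockProj hPr r (a - b), hsub, smul_sub]
  congr 1
  abel

theorem sum_sum_range_norm_blockProj_le (hPr : ∀ r v x, Pr r v x = if x.1 = r then v x else 0)
    {φ : ℕ → EuclideanSpace 𝕜 (α × β)} (hφ : ∀ i, ‖φ i‖ ≤ 1) (k : ℕ) :
    ∑ r, ∑ i ∈ Finset.range k, ‖Pr r (φ i)‖ ≤ k * √(Fintype.card α) := by
  rw [Finset.sum_comm]
  calc ∑ i ∈ Finset.range k, ∑ r, ‖Pr r (φ i)‖ ≤ ∑ i ∈ Finset.range k, √(Fintype.card α) :=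
        Finset.sum_le_sum fun i _ => (sum_norm_blockProj_le_s16 hPr (φ i)).trans
          (mul_le_of_le_one_right (Real.sqrt_nonneg _) (hφ i))
    _ = k * √(Fintype.card α) := by simp

end BlockProjection

theorem average_case_hardness_general
    (N : ℕ) (hN : 1 ≤ N) (W : Type) [Fintype W]
    (Pr : Fin N → EuclideanSpace ℂ (Fin N × W) → EuclideanSpace ℂ (Fin N × W))
    (hPr : ∀ r v x, Pr r v x = if x.1 = r then v x else 0)
    (Or : Fin N → EuclideanSpace ℂ (Fin N × W) → EuclideanSpace ℂ (Fin N × W))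
    (hOr : ∀ r v, Or r v = v - (2 : ℂ) • Pr r v)
    (k : ℕ)
    (U : ℕ → EuclideanSpace ℂ (Fin N × W) ≃ₗᵢ[ℂ] EuclideanSpace ℂ (Fin N × W))
    (v₀ : EuclideanSpace ℂ (Fin N × W)) (hv₀ : ‖v₀‖ = 1)
    (ψ : Fin N → ℕ → EuclideanSpace ℂ (Fin N × W))
    (hψ0 : ∀ r, ψ r 0 = U 0 v₀)
    (hψ : ∀ r j, ψ r (j + 1) = U (j + 1) (Or r (ψ r j)))
    (φ : ℕ → EuclideanSpace ℂ (Fin N × W))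
    (hφ0 : φ 0 = U 0 v₀)
    (hφ : ∀ j, φ (j + 1) = U (j + 1) (φ j))
    (P : EuclideanSpace ℂ (Fin N × W) →ₗ[ℂ] EuclideanSpace ℂ (Fin N × W))
    (hPproj : P ∘ₗ P = P)
    (hPsa : ∀ v w : EuclideanSpace ℂ (Fin N × W),
      (inner ℂ (P v) w : ℂ) = inner ℂ v (P w)) :
    |(1 / (N : ℝ)) * (∑ r : Fin N, ‖P (ψ r k)‖ ^ 2) - ‖P (φ k)‖ ^ 2|
      ≤ 2 * (k : ℝ) / Real.sqrt N := by
  have : Nonempty (Fin N) := ⟨⟨0, hN⟩⟩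
  have hP : P.IsSymmetricProjection := ⟨hPproj, hPsa⟩
  have hφnorm (j : ℕ) : ‖φ j‖ = 1 :=
    hv₀ ▸ norm_eq_of_norm_preserving_steps (fun j => (U j).norm_map) (fun _ => rfl) hφ0 hφ j
  have hψnorm (r : Fin N) (j : ℕ) : ‖ψ r j‖ = 1 :=
    hv₀ ▸ norm_eq_of_norm_preserving_steps (fun j => (U j).norm_map)
      (fun v => (hOr r v).symm ▸ norm_sub_two_smul_blockProj hPr r v) (hψ0 r) (hψ r) j
  have hhybrid (r : Fin N) : ‖ψ r k - φ k‖ ≤ 2 * ∑ i ∈ Finset.range k, ‖Pr r (φ i)‖ := by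
    have hOr_isometry : Isometry (Or r) :=
      funext (hOr r) ▸ isometry_sub_two_smul_blockProj hPr r
    rw [← dist_eq_norm, Finset.mul_sum]
    refine (dist_le_sum_range_dist_apply_self (fun j => (U j).isometry) hOr_isometry.lipschitz
      (by rw [hψ0, hφ0]) (hψ r) hφ k).trans_eq (Finset.sum_congr rfl fun i _ => ?_)
    rw [dist_eq_norm, hOr, sub_sub_cancel_left, norm_neg, norm_smul]
    norm_num
  have hN' : (0 : ℝ) < N := by exact_mod_cast hN
  calc |(1 / (N : ℝ)) * (∑ r : Fin N, ‖P (ψ r k)‖ ^ 2) - ‖P (φ k)‖ ^ 2|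
      ≤ 1 / N * ∑ r : Fin N, |‖P (ψ r k)‖ ^ 2 - ‖P (φ k)‖ ^ 2| := by
        simpa using abs_inv_card_mul_sum_sub_le (fun r => ‖P (ψ r k)‖ ^ 2) (‖P (φ k)‖ ^ 2)
    _ ≤ 1 / N * ∑ r : Fin N, 2 * ∑ i ∈ Finset.range k, ‖Pr r (φ i)‖ := by
        gcongr with r
        exact (hP.abs_norm_sq_apply_sub_norm_sq_apply_le (hψnorm r k) (hφnorm k)).trans
          (hhybrid r)
    _ = 2 / N * ∑ r : Fin N, ∑ i ∈ Finset.range k, ‖Pr r (φ i)‖ := by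
        rw [← Finset.mul_sum]
        ring
    _ ≤ 2 / N * (k * √N) := by
        gcongr
        simpa using sum_sum_range_norm_blockProj_le hPr (fun i => (hφnorm i).le) k
    _ = 2 * k / √N := by
        field_simp
        rw [Real.sq_sqrt hN'.le, mul_comm]

/-- Theorem 3 (average-case hardness of the decision problem): for any final
accepting measurement given by an orthogonal projection `P`, the average
advantage in distinguishing a uniformly random oracle `O_r` from the identity
oracle is at most `2k/√N`. -/
theorem average_case_hardness
    (N : ℕ) (hN : 1 ≤ N) (W : Type) [Fintype W] [Nonempty W]
    (Pr : Fin N → EuclideanSpace ℂ (Fin N × W) → EuclideanSpace ℂ (Fin N × W))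
    (hPr : ∀ r v x, Pr r v x = if x.1 = r then v x else 0)
    (Or : Fin N → EuclideanSpace ℂ (Fin N × W) → EuclideanSpace ℂ (Fin N × W))
    (hOr : ∀ r v, Or r v = v - (2 : ℂ) • Pr r v)
    (k : ℕ)
    (U : ℕ → EuclideanSpace ℂ (Fin N × W) ≃ₗᵢ[ℂ] EuclideanSpace ℂ (Fin N × W))
    (v₀ : EuclideanSpace ℂ (Fin N × W)) (hv₀ : ‖v₀‖ = 1)
    (ψ : Fin N → ℕ → EuclideanSpace ℂ (Fin N × W))
    (hψ0 : ∀ r, ψ r 0 = U 0 v₀)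
    (hψ : ∀ r j, ψ r (j + 1) = U (j + 1) (Or r (ψ r j)))
    (φ : ℕ → EuclideanSpace ℂ (Fin N × W))
    (hφ0 : φ 0 = U 0 v₀)
    (hφ : ∀ j, φ (j + 1) = U (j + 1) (φ j))
    (P : EuclideanSpace ℂ (Fin N × W) →ₗ[ℂ] EuclideanSpace ℂ (Fin N × W))
    (hPproj : P ∘ₗ P = P)
    (hPsa : ∀ v w : EuclideanSpace ℂ (Fin N × W),
      (inner ℂ (P v) w : ℂ) = inner ℂ v (P w)) :
    |(1 / (N : ℝ)) * (∑ r : Fin N, ‖P (ψ r k)‖ ^ 2) - ‖P (φ k)‖ ^ 2|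
      ≤ 2 * (k : ℝ) / Real.sqrt N :=
  average_case_hardness_general N hN W Pr hPr Or hOr k U v₀ hv₀ ψ hψ0 hψ φ hφ0 hφ P hPproj hPsa
end

section
/- (Holevo–Helstrom bound for pure states) For any two unit vectors ψ, φ in a finite-dimensional complex inner product space and any orthogonal projection P, the difference of acceptance probabilities is bounded by the trace distance: |‖P ψ‖² − ‖P φ‖²| ≤ √(1 − ‖⟪ψ, φ⟫‖²). -/
/-!
With `Q = 2P - 1`, the reflection across the range of `P`, one has `2‖P v‖² = ‖v‖² + re ⟪Q v, v⟫`.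
Since `Q` is symmetric, `re ⟪Q ψ, ψ⟫ - re ⟪Q φ, φ⟫ = re ⟪Q (ψ + φ), ψ - φ⟫`, and since `Q` is an
isometry this is at most `‖ψ + φ‖ ‖ψ - φ‖ = 2 √(1 - (re ⟪ψ, φ⟫)²)` for unit vectors. Replacing `φ`
by a phase multiple `c φ` with `⟪ψ, c φ⟫ = |⟪ψ, φ⟫|` leaves `‖P φ‖` unchanged and gives the bound.
-/

open RCLike
open scoped InnerProductSpace

section

variable {𝕜 E : Type*} [RCLike 𝕜] [SeminormedAddCommGroup E] [InnerProductSpace 𝕜 E]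

theorem norm_sub_mul_norm_add_of_norm_eq_one {x y : E} (hx : ‖x‖ = 1) (hy : ‖y‖ = 1) :
    ‖x - y‖ * ‖x + y‖ = 2 * √(1 - re ⟪x, y⟫_𝕜 ^ 2) := by
  calc ‖x - y‖ * ‖x + y‖ = √((‖x - y‖ * ‖x + y‖) ^ 2) := (Real.sqrt_sq (by positivity)).symm
    _ = √(2 ^ 2 * (1 - re ⟪x, y⟫_𝕜 ^ 2)) := by
        rw [mul_pow, norm_sub_sq (𝕜 := 𝕜), norm_add_sq (𝕜 := 𝕜), hx, hy]; ring_nf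
    _ = 2 * √(1 - re ⟪x, y⟫_𝕜 ^ 2) := by
        rw [Real.sqrt_mul (by positivity), Real.sqrt_sq zero_le_two]

namespace LinearMap

theorem IsSymmetric.abs_re_inner_map_self_sub_le {T : E →ₗ[𝕜] E} (hT : T.IsSymmetric)
    (hT_norm : ∀ v, ‖T v‖ ≤ ‖v‖) (x y : E) :
    |re ⟪T x, x⟫_𝕜 - re ⟪T y, y⟫_𝕜| ≤ ‖x - y‖ * ‖x + y‖ := by
  have hcross : re ⟪T y, x⟫_𝕜 = re ⟪T x, y⟫_𝕜 := by rw [hT, ← inner_conj_symm, conj_re]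
  calc |re ⟪T x, x⟫_𝕜 - re ⟪T y, y⟫_𝕜| = |re ⟪T (x + y), x - y⟫_𝕜| := by
        simp only [map_add, inner_add_left, inner_sub_right, map_sub]
        congr 1; linarith
    _ ≤ ‖T (x + y)‖ * ‖x - y‖ := (abs_re_le_norm _).trans (norm_inner_le_norm _ _)
    _ ≤ ‖x - y‖ * ‖x + y‖ := by rw [mul_comm]; gcongr; exact hT_norm _

theorem two_smul_sub_one_apply (P : E →ₗ[𝕜] E) (v : E) :
    (2 • P - 1 : E →ₗ[𝕜] E) v = P v - (v - P v) := by
  rw [sub_apply, smul_apply, two_smul, Module.End.one_apply]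
  abel

namespace IsSymmetricProjection

variable {P : E →ₗ[𝕜] E}

theorem inner_apply_sub_apply_eq_zero (hP : P.IsSymmetricProjection) (v : E) :
    ⟪P v, v - P v⟫_𝕜 = 0 := by
  have hPP : P (P v) = P v := congr($hP.isIdempotentElem.eq v)
  rw [inner_sub_right, ← hP.isSymmetric, hPP, sub_self]

theorem re_inner_apply_self (hP : P.IsSymmetricProjection) (v : E) :
    re ⟪P v, v⟫_𝕜 = ‖P v‖ ^ 2 := by
  have h := hP.inner_apply_sub_apply_eq_zero v
  rw [inner_sub_right, sub_eq_zero] at h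
  rw [h, inner_self_eq_norm_sq]

theorem isSymmetric_two_smul_sub_one (hP : P.IsSymmetricProjection) : (2 • P - 1).IsSymmetric :=
  two_nsmul P ▸ (hP.isSymmetric.add hP.isSymmetric).sub .id

theorem re_inner_two_smul_sub_one_apply_self (hP : P.IsSymmetricProjection) (v : E) :
    re ⟪(2 • P - 1 : E →ₗ[𝕜] E) v, v⟫_𝕜 = 2 * ‖P v‖ ^ 2 - ‖v‖ ^ 2 := by
  rw [two_smul_sub_one_apply, inner_sub_left, inner_sub_left, map_sub, map_sub,
    hP.re_inner_apply_self, inner_self_eq_norm_sq]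
  ring

theorem norm_two_smul_sub_one_apply (hP : P.IsSymmetricProjection) (v : E) :
    ‖(2 • P - 1 : E →ₗ[𝕜] E) v‖ = ‖v‖ := by
  have horth := hP.inner_apply_sub_apply_eq_zero v
  have hv := norm_add_sq (𝕜 := 𝕜) (P v) (v - P v)
  rw [add_sub_cancel, horth, map_zero, mul_zero, add_zero] at hv
  rw [two_smul_sub_one_apply, ← sq_eq_sq₀ (norm_nonneg _) (norm_nonneg _), norm_sub_sq (𝕜 := 𝕜),
    horth, hv, map_zero, mul_zero, sub_zero]

theorem abs_norm_apply_sq_sub_le (hP : P.IsSymmetricProjection) {x y : E} (hxy : ‖x‖ = ‖y‖) :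
    |‖P x‖ ^ 2 - ‖P y‖ ^ 2| ≤ ‖x - y‖ * ‖x + y‖ / 2 := by
  have h := hP.isSymmetric_two_smul_sub_one.abs_re_inner_map_self_sub_le
    (fun v => (hP.norm_two_smul_sub_one_apply v).le) x y
  rw [hP.re_inner_two_smul_sub_one_apply_self, hP.re_inner_two_smul_sub_one_apply_self, hxy,
    sub_sub_sub_cancel_right, ← mul_sub, abs_mul, abs_two] at h
  linarith

theorem abs_norm_apply_sq_sub_le_sqrt (hP : P.IsSymmetricProjection) {x y : E}
    (hx : ‖x‖ = 1) (hy : ‖y‖ = 1) :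
    |‖P x‖ ^ 2 - ‖P y‖ ^ 2| ≤ √(1 - ‖⟪x, y⟫_𝕜‖ ^ 2) := by
  obtain ⟨c, hc, hcxy⟩ := RCLike.exists_norm_eq_mul_self ⟪x, y⟫_𝕜
  have hcy : ‖c • y‖ = 1 := by rw [norm_smul, hc, hy, one_mul]
  have hPcy : ‖P (c • y)‖ = ‖P y‖ := by rw [map_smul, norm_smul, hc, one_mul]
  have hre : re ⟪x, c • y⟫_𝕜 = ‖⟪x, y⟫_𝕜‖ := by rw [inner_smul_right, ← hcxy, ofReal_re]
  calc |‖P x‖ ^ 2 - ‖P y‖ ^ 2| = |‖P x‖ ^ 2 - ‖P (c • y)‖ ^ 2| := by rw [hPcy]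
    _ ≤ ‖x - c • y‖ * ‖x + c • y‖ / 2 := hP.abs_norm_apply_sq_sub_le (hx.trans hcy.symm)
    _ = √(1 - ‖⟪x, y⟫_𝕜‖ ^ 2) := by
        rw [norm_sub_mul_norm_add_of_norm_eq_one (𝕜 := 𝕜) hx hcy, hre]; ring

end IsSymmetricProjection
end LinearMap

end

theorem holevo_helstrom_pure_states_general
    {E : Type*} [NormedAddCommGroup E] [InnerProductSpace ℂ E]
    (ψ φ : E) (hψ : ‖ψ‖ = 1) (hφ : ‖φ‖ = 1)
    (P : E →ₗ[ℂ] E) (hPproj : P ∘ₗ P = P)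
    (hPsa : ∀ v w : E, (inner ℂ (P v) w : ℂ) = inner ℂ v (P w)) :
    |‖P ψ‖ ^ 2 - ‖P φ‖ ^ 2| ≤ Real.sqrt (1 - ‖(inner ℂ ψ φ : ℂ)‖ ^ 2) :=
  LinearMap.IsSymmetricProjection.abs_norm_apply_sq_sub_le_sqrt (P := P) ⟨hPproj, hPsa⟩ hψ hφ

/-- Holevo–Helstrom bound for pure states: for any orthogonal projection `P`,
the difference of acceptance probabilities of two pure states is bounded by
their trace distance `√(1 − |⟪ψ, φ⟫|²)`. -/
theorem holevo_helstrom_pure_states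
    {E : Type*} [NormedAddCommGroup E] [InnerProductSpace ℂ E]
    [FiniteDimensional ℂ E]
    (ψ φ : E) (hψ : ‖ψ‖ = 1) (hφ : ‖φ‖ = 1)
    (P : E →ₗ[ℂ] E) (hPproj : P ∘ₗ P = P)
    (hPsa : ∀ v w : E, (inner ℂ (P v) w : ℂ) = inner ℂ v (P w)) :
    |‖P ψ‖ ^ 2 - ‖P φ‖ ^ 2| ≤ Real.sqrt (1 - ‖(inner ℂ ψ φ : ℂ)‖ ^ 2) :=
  holevo_helstrom_pure_states_general ψ φ hψ hφ P hPproj hPsa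
end
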